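/- Let (B,+,∘,ι) be an almost left semi-brace satisfying condition (C1): (ι(a) + b) ∘ ι(1) = ι(a) + (b ∘ ι(1)) for all a, b ∈ B, and condition (C2): a + λ_b(c) ∘ (ι(1) + ρ_c(b)) = a + b ∘ (ι(1) + c) for all a, b, c ∈ B, where λ_a(b) := a ∘ (ι(a) + b) and ρ_b(a) := \overline{(ι(a) + b)} ∘ b. Define a ⊕ b := ι⁻¹(ι(a) + ι(b)) and a ∘ᵒᵖ b := b ∘ a, and for the left semi-brace (B,⊕,∘ᵒᵖ) set λ'_a(b) := a ∘ᵒᵖ (ā ⊕ b) and ρ'_b(a) := \overline{(ā ⊕ b)} ∘ᵒᵖ b (inverses taken in the group (B,∘)). Then λ'_a(b) = \overline{λ_{ā}(b̄)} and ρ'_b(a) = \overline{ρ_{b̄}(ā)} for all a, b ∈ B, and (B,⊕,∘ᵒᵖ) satisfies: a ⊕ (λ'_b(c) ∘ᵒᵖ (1 ⊕ ρ'_c(b))) = a ⊕ (b ∘ᵒᵖ (1 ⊕ c)) for all a, b, c ∈ B, where 1 is the identity of (B,∘). -/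

import Mathlib

/-!
Applying `ι(a ∘ b) = b̄ ∘ ι(a)` with `a = 1` gives `ι(a) = ā ∘ ι(1)`, hence `ι⁻¹(x) = ι(1) ∘ x̄`.
With (C1) this turns the new sum into `a ⊕ b = \overline{ι(a) + b̄}`. The formulas for `λ'` and
`ρ'` are then group algebra, and the identity for `(B, ⊕, ∘ᵒᵖ)` is (C2) at `(ι(a), b̄, c̄)`.
-/

namespace AlmostLeftSemiBrace

variable {G : Type*} [Group G]

theorem iota_eq_inv_mul {iota : G → G} (iota_mul : ∀ a b : G, iota (a * b) = b⁻¹ * iota a)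
    (a : G) : iota a = a⁻¹ * iota 1 := by
  simpa using iota_mul 1 a

theorem eq_iota_one_mul_inv {iota iotaInv : G → G}
    (iota_mul : ∀ a b : G, iota (a * b) = b⁻¹ * iota a)
    (hinv : Function.RightInverse iotaInv iota) (x : G) : iotaInv x = iota 1 * x⁻¹ := by
  have h := hinv x
  rw [iota_eq_inv_mul iota_mul, inv_mul_eq_iff_eq_mul] at h
  exact eq_mul_inv_of_mul_eq h.symm

variable [Add G]

section

variable (iota iotaInv : G → G)

def lam (a b : G) : G := a * (iota a + b)

def rho (b a : G) : G := (iota a + b)⁻¹ * b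

def oplus (a b : G) : G := iotaInv (iota a + iota b)

-- `λ'` and `ρ'` of the left semi-brace `(G, ⊕, ∘ᵒᵖ)`, with `a ∘ᵒᵖ b` written as `b * a`.
def lamOp (a b : G) : G := oplus iota iotaInv a⁻¹ b * a

def rhoOp (b a : G) : G := b * (oplus iota iotaInv a⁻¹ b)⁻¹

end

variable {iota iotaInv : G → G}

theorem oplus_eq (iota_mul : ∀ a b : G, iota (a * b) = b⁻¹ * iota a)
    (C1 : ∀ a b : G, (iota a + b) * iota 1 = iota a + b * iota 1)
    (hinv : Function.RightInverse iotaInv iota) (a b : G) :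
    oplus iota iotaInv a b = (iota a + b⁻¹)⁻¹ := by
  rw [oplus, iota_eq_inv_mul iota_mul b, ← C1, eq_iota_one_mul_inv iota_mul hinv, mul_inv_rev,
    mul_inv_cancel_left]

variable (iota_mul : ∀ a b : G, iota (a * b) = b⁻¹ * iota a)
  (C1 : ∀ a b : G, (iota a + b) * iota 1 = iota a + b * iota 1)
  (hinv : Function.RightInverse iotaInv iota)
include iota_mul C1 hinv

theorem lamOp_eq (a b : G) : lamOp iota iotaInv a b = (lam iota a⁻¹ b⁻¹)⁻¹ := by
  rw [lamOp, oplus_eq iota_mul C1 hinv, lam, mul_inv_rev, inv_inv]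

theorem rhoOp_eq (b a : G) : rhoOp iota iotaInv b a = (rho iota b⁻¹ a⁻¹)⁻¹ := by
  rw [rhoOp, oplus_eq iota_mul C1 hinv, rho, mul_inv_rev, inv_inv, inv_inv]

theorem oplus_lamOp_mul_oplus_rhoOp
    (C2 : ∀ a b c : G, a + lam iota b c * (iota 1 + rho iota c b) = a + b * (iota 1 + c))
    (a b c : G) :
    oplus iota iotaInv a (oplus iota iotaInv 1 (rhoOp iota iotaInv c b) * lamOp iota iotaInv b c) =
      oplus iota iotaInv a (oplus iota iotaInv 1 c * b) := by
  simp only [oplus_eq iota_mul C1 hinv, lamOp_eq iota_mul C1 hinv, rhoOp_eq iota_mul C1 hinv,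
    mul_inv_rev, inv_inv]
  rw [C2]

end AlmostLeftSemiBrace

theorem stmt_18_general (B : Type*)
    (add mul : B → B → B) (one : B) (inv : B → B) (iota : B → B)
    (mul_assoc : ∀ a b c : B, mul (mul a b) c = mul a (mul b c))
    (one_mul : ∀ a : B, mul one a = a)
    (inv_mul : ∀ a : B, mul (inv a) a = one)
    (iota_mul : ∀ a b : B, iota (mul a b) = mul (inv b) (iota a))
    (lam : B → B → B) (hlam : ∀ a b : B, lam a b = mul a (add (iota a) b))
    (rho : B → B → B) (hrho : ∀ b a : B, rho b a = mul (inv (add (iota a) b)) b)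
    (C1 : ∀ a b : B, mul (add (iota a) b) (iota one) = add (iota a) (mul b (iota one)))
    (C2 : ∀ a b c : B,
      add a (mul (lam b c) (add (iota one) (rho c b))) =
        add a (mul b (add (iota one) c)))
    (iotaInv : B → B)
    (hinv₂ : ∀ a : B, iota (iotaInv a) = a)
    (oplus : B → B → B)
    (hoplus : ∀ a b : B, oplus a b = iotaInv (add (iota a) (iota b)))
    (opmul : B → B → B) (hopmul : ∀ a b : B, opmul a b = mul b a)
    (lam' : B → B → B) (hlam' : ∀ a b : B, lam' a b = opmul a (oplus (inv a) b))
    (rho' : B → B → B) (hrho' : ∀ b a : B, rho' b a = opmul (inv (oplus (inv a) b)) b) :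
    (∀ a b : B, lam' a b = inv (lam (inv a) (inv b))) ∧
      (∀ a b : B, rho' b a = inv (rho (inv b) (inv a))) ∧
      ∀ a b c : B,
        oplus a (opmul (lam' b c) (oplus one (rho' c b))) =
          oplus a (opmul b (oplus one c)) := by
  let _ : Mul B := ⟨mul⟩
  let _ : One B := ⟨one⟩
  let _ : Inv B := ⟨inv⟩
  let _ : Add B := ⟨add⟩
  let _ : Group B := Group.ofLeftAxioms mul_assoc one_mul inv_mul
  obtain rfl : lam = AlmostLeftSemiBrace.lam iota := funext₂ hlam
  obtain rfl : rho = AlmostLeftSemiBrace.rho iota := funext₂ hrho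
  obtain rfl : oplus = AlmostLeftSemiBrace.oplus iota iotaInv := funext₂ hoplus
  obtain rfl : opmul = fun a b => b * a := funext₂ hopmul
  obtain rfl : lam' = AlmostLeftSemiBrace.lamOp iota iotaInv := funext₂ hlam'
  obtain rfl : rho' = AlmostLeftSemiBrace.rhoOp iota iotaInv := funext₂ hrho'
  exact ⟨AlmostLeftSemiBrace.lamOp_eq iota_mul C1 hinv₂,
    fun a b => AlmostLeftSemiBrace.rhoOp_eq iota_mul C1 hinv₂ b a,
    AlmostLeftSemiBrace.oplus_lamOp_mul_oplus_rhoOp iota_mul C1 hinv₂ C2⟩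

/-- Almost left semi-brace: `(B,+)` a semigroup, `(B,∘)` a group with identity
`one` and inverse `inv`, and `iota : B → B` with `ι(a∘b) = b̄ ∘ ι(a)` and
`a ∘ (b + c) = (a ∘ b) + a ∘ (ι(a) + c)`. -/
theorem stmt_18 (B : Type*)
    (add mul : B → B → B) (one : B) (inv : B → B) (iota : B → B)
    (add_assoc : ∀ a b c : B, add (add a b) c = add a (add b c))
    (mul_assoc : ∀ a b c : B, mul (mul a b) c = mul a (mul b c))
    (one_mul : ∀ a : B, mul one a = a) (mul_one : ∀ a : B, mul a one = a)
    (inv_mul : ∀ a : B, mul (inv a) a = one) (mul_inv : ∀ a : B, mul a (inv a) = one)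
    (iota_mul : ∀ a b : B, iota (mul a b) = mul (inv b) (iota a))
    (dist : ∀ a b c : B, mul a (add b c) = add (mul a b) (mul a (add (iota a) c)))
    (lam : B → B → B) (hlam : ∀ a b : B, lam a b = mul a (add (iota a) b))
    (rho : B → B → B) (hrho : ∀ b a : B, rho b a = mul (inv (add (iota a) b)) b)
    (C1 : ∀ a b : B, mul (add (iota a) b) (iota one) = add (iota a) (mul b (iota one)))
    (C2 : ∀ a b c : B,
      add a (mul (lam b c) (add (iota one) (rho c b))) =
        add a (mul b (add (iota one) c)))
    (iotaInv : B → B)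
    (hinv₁ : ∀ a : B, iotaInv (iota a) = a) (hinv₂ : ∀ a : B, iota (iotaInv a) = a)
    (oplus : B → B → B)
    (hoplus : ∀ a b : B, oplus a b = iotaInv (add (iota a) (iota b)))
    (opmul : B → B → B) (hopmul : ∀ a b : B, opmul a b = mul b a)
    (lam' : B → B → B) (hlam' : ∀ a b : B, lam' a b = opmul a (oplus (inv a) b))
    (rho' : B → B → B) (hrho' : ∀ b a : B, rho' b a = opmul (inv (oplus (inv a) b)) b) :
    (∀ a b : B, lam' a b = inv (lam (inv a) (inv b))) ∧
      (∀ a b : B, rho' b a = inv (rho (inv b) (inv a))) ∧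
      ∀ a b c : B,
        oplus a (opmul (lam' b c) (oplus one (rho' c b))) =
          oplus a (opmul b (oplus one c)) :=
  stmt_18_general B add mul one inv iota mul_assoc one_mul inv_mul iota_mul lam hlam rho hrho C1 C2
    iotaInv hinv₂ oplus hoplus opmul hopmul lam' hlam' rho' hrho'
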